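/- arXiv:1805.03050 — 7 statements merged into one kernel-verified Lean document; each statement's English description precedes it below -/
import Mathlib

section
/- A representation ρ of a group G into SU(2) is reducible (admits a nontrivial invariant subspace of ℂ²) if and only if its image is an abelian subgroup of SU(2). -/
/-!
A nonzero proper invariant subspace of `ℂ²` is a line `ℂ v`, so `v` is a common eigenvector of
the image. Elements of `SU(2)` commute with the conjugate-linear map `quatJ`, so `quatJ v` is a
common eigenvector as well; since `v` and `quatJ v` span `ℂ²`, the image is simultaneously
diagonal, hence abelian. Conversely, an eigenspace of a non-scalar element of a commuting family
is a proper invariant subspace, and if all elements are scalar every line is invariant.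
-/

open Matrix Module Module.End Submodule
open scoped ComplexOrder

section InvariantSubspace

variable {K V : Type*} [Field K] [AddCommGroup V] [Module K V]

theorem Submodule.eq_span_singleton_of_ne_top_of_finrank_eq_two (hV : finrank K V = 2)
    {W : Submodule K V} (hW : W ≠ ⊤) {v : V} (hvW : v ∈ W) (hv : v ≠ 0) : W = K ∙ v := by
  have : FiniteDimensional K V := .of_finrank_eq_succ hV
  have hle : K ∙ v ≤ W := (span_singleton_le_iff_mem v W).mpr hvW
  refine (eq_of_le_of_finrank_le hle ?_).symm
  have := finrank_lt hW
  rw [finrank_span_singleton hv]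
  omega

namespace Module.End

theorem exists_invariant_ne_bot_ne_top_of_commute {ι : Type*} [IsAlgClosed K]
    [FiniteDimensional K V] (hV : 1 < finrank K V) (f : ι → End K V)
    (hf : ∀ i j, Commute (f i) (f j)) :
    ∃ W : Submodule K V, W ≠ ⊥ ∧ W ≠ ⊤ ∧ ∀ i, ∀ v ∈ W, f i v ∈ W := by
  have : Nontrivial V := Module.nontrivial_of_finrank_pos (R := K) (by omega)
  by_cases hscalar : ∀ i, ∃ c : K, f i = algebraMap K (End K V) c
  · obtain ⟨v, hv⟩ := exists_ne (0 : V)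
    refine ⟨K ∙ v, by simpa using hv, fun htop => ?_, fun i w hw => ?_⟩
    · have := finrank_span_singleton (K := K) hv
      rw [htop, finrank_top] at this
      omega
    · obtain ⟨c, hc⟩ := hscalar i
      simpa [hc] using smul_mem _ c hw
  · push Not at hscalar
    obtain ⟨i₀, hi₀⟩ := hscalar
    obtain ⟨μ, hμ⟩ := exists_eigenvalue (f i₀)
    refine ⟨eigenspace (f i₀) μ, hμ, fun htop => hi₀ μ ?_,
      fun i v hv => mapsTo_genEigenspace_of_comm (hf i₀ i) μ 1 hv⟩
    ext v
    simpa using mem_eigenspace_iff.mp (htop ▸ mem_top : v ∈ eigenspace (f i₀) μ)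

theorem commute_of_forall_mem_eq_smul {s : Set V} (hs : span K s = ⊤) {f g : End K V}
    (hf : ∀ x ∈ s, ∃ a : K, f x = a • x) (hg : ∀ x ∈ s, ∃ b : K, g x = b • x) :
    Commute f g := by
  refine LinearMap.ext_on hs fun x hx => ?_
  obtain ⟨a, ha⟩ := hf x hx
  obtain ⟨b, hb⟩ := hg x hx
  simp [ha, hb, smul_smul, mul_comm a b]

end Module.End

end InvariantSubspace

theorem Matrix.commute_toLinAlgEquiv'_iff {n R : Type*} [Fintype n] [DecidableEq n] [CommRing R]
    {A B : Matrix n n R} : Commute (toLinAlgEquiv' A) (toLinAlgEquiv' B) ↔ Commute A B :=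
  commute_map_iff toLinAlgEquiv'.injective

theorem Matrix.conjTranspose_eq_adjugate_of_mem_specialUnitaryGroup {n : Type*} [Fintype n]
    [DecidableEq n] {U : Matrix n n ℂ} (hU : U ∈ specialUnitaryGroup n ℂ) : Uᴴ = adjugate U := by
  obtain ⟨hUu, hdet⟩ := mem_specialUnitaryGroup_iff.mp hU
  rw [← star_eq_conjTranspose, ← inv_eq_left_inv (mem_unitaryGroup_iff'.mp hUu), inv_def, hdet,
    Ring.inverse_one, one_smul]

/-- Identifying `ℂ²` with the quaternions via `(z, w) ↦ z + j w` (scalars acting on the right), this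
is right multiplication by `j`; it commutes with `SU(2)`, which acts by left multiplication by unit
quaternions. -/
def quatJ (v : Fin 2 → ℂ) : Fin 2 → ℂ := ![-star (v 1), star (v 0)]

theorem quatJ_smul (c : ℂ) (v : Fin 2 → ℂ) : quatJ (c • v) = star c • quatJ v := by
  ext i; fin_cases i <;> simp [quatJ]

theorem quatJ_eq_zero_iff {v : Fin 2 → ℂ} : quatJ v = 0 ↔ v = 0 := by
  constructor
  · intro h
    have h0 := congrFun h 0
    have h1 := congrFun h 1
    ext i; fin_cases i <;> simp_all [quatJ]
  · rintro rfl; ext i; fin_cases i <;> simp [quatJ]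

theorem star_dotProduct_quatJ (v : Fin 2 → ℂ) : star v ⬝ᵥ quatJ v = 0 := by
  simp [quatJ, dotProduct, Fin.sum_univ_two]; ring

theorem span_pair_quatJ_eq_top {v : Fin 2 → ℂ} (hv : v ≠ 0) : span ℂ {v, quatJ v} = ⊤ := by
  have hli : LinearIndependent ℂ ![v, quatJ v] := by
    refine LinearIndependent.pair_iff.mpr fun s t hst => ?_
    have hs : s = 0 := by
      have := congrArg (star v ⬝ᵥ ·) hst
      simp only [dotProduct_add, dotProduct_smul, star_dotProduct_quatJ, dotProduct_zero,
        smul_eq_mul, mul_zero, add_zero] at this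
      exact (mul_eq_zero.mp this).resolve_right (dotProduct_star_self_eq_zero.not.mpr hv)
    subst hs
    simpa [quatJ_eq_zero_iff, hv] using hst
  simpa [Set.pair_comm] using hli.span_eq_top_of_card_eq_finrank' (by simp)

theorem Matrix.mulVec_quatJ_of_mem_specialUnitaryGroup {U : Matrix (Fin 2) (Fin 2) ℂ}
    (hU : U ∈ specialUnitaryGroup (Fin 2) ℂ) (v : Fin 2 → ℂ) : U *ᵥ quatJ v = quatJ (U *ᵥ v) := by
  have hadj := conjTranspose_eq_adjugate_of_mem_specialUnitaryGroup hU
  rw [adjugate_fin_two] at hadj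
  have h00 : star (U 0 0) = U 1 1 := by simpa using congrFun (congrFun hadj 0) 0
  have h01 : star (U 0 1) = -U 1 0 := by simpa using congrFun (congrFun hadj 1) 0
  have h10 : star (U 1 0) = -U 0 1 := by simpa using congrFun (congrFun hadj 0) 1
  have h11 : star (U 1 1) = U 0 0 := by simpa using congrFun (congrFun hadj 1) 1
  ext i; fin_cases i <;> simp [quatJ, mulVec, dotProduct, Fin.sum_univ_two, h00, h01, h10, h11]; ring

theorem Matrix.commute_of_mulVec_eq_smul_of_mem_specialUnitaryGroup
    {U V : Matrix (Fin 2) (Fin 2) ℂ} (hU : U ∈ specialUnitaryGroup (Fin 2) ℂ)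
    (hV : V ∈ specialUnitaryGroup (Fin 2) ℂ) {v : Fin 2 → ℂ} (hv : v ≠ 0) {a b : ℂ}
    (hUv : U *ᵥ v = a • v) (hVv : V *ᵥ v = b • v) : Commute U V := by
  have diagonal : ∀ {A : Matrix (Fin 2) (Fin 2) ℂ} {c : ℂ}, A ∈ specialUnitaryGroup (Fin 2) ℂ →
      A *ᵥ v = c • v →
      ∀ x ∈ ({v, quatJ v} : Set (Fin 2 → ℂ)), ∃ d : ℂ, toLinAlgEquiv' A x = d • x := by
    rintro A c hA hAv x (rfl | rfl)
    · exact ⟨c, hAv⟩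
    · exact ⟨star c, by
        rw [toLinAlgEquiv'_apply, mulVec_quatJ_of_mem_specialUnitaryGroup hA, hAv, quatJ_smul]⟩
  exact commute_toLinAlgEquiv'_iff.mp <| commute_of_forall_mem_eq_smul
    (span_pair_quatJ_eq_top hv) (diagonal hU hUv) (diagonal hV hVv)

/-- A representation of a group `G` into `SU(2)` is reducible (admits a nontrivial
invariant subspace of `ℂ²`) if and only if its image is abelian. -/
theorem su2_reducible_iff_abelian (G : Type*) [Group G]
    (ρ : G →* Matrix.specialUnitaryGroup (Fin 2) ℂ) :
    (∃ W : Submodule ℂ (Fin 2 → ℂ), W ≠ ⊥ ∧ W ≠ ⊤ ∧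
      ∀ g : G, ∀ v ∈ W, (ρ g : Matrix (Fin 2) (Fin 2) ℂ).mulVec v ∈ W) ↔
    (∀ g h : G, ρ g * ρ h = ρ h * ρ g) := by
  constructor
  · rintro ⟨W, hbot, htop, hW⟩ g h
    obtain ⟨v, hvW, hv⟩ := W.exists_mem_ne_zero_of_ne_bot hbot
    have hWv := W.eq_span_singleton_of_ne_top_of_finrank_eq_two (finrank_fin_fun ℂ) htop hvW hv
    have eigen : ∀ k, ∃ c : ℂ, c • v = (ρ k : Matrix (Fin 2) (Fin 2) ℂ) *ᵥ v := fun k =>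
      mem_span_singleton.mp (hWv ▸ hW k v hvW)
    obtain ⟨a, ha⟩ := eigen g
    obtain ⟨b, hb⟩ := eigen h
    exact Subtype.ext (commute_of_mulVec_eq_smul_of_mem_specialUnitaryGroup (ρ g).2 (ρ h).2 hv
      ha.symm hb.symm).eq
  · intro hab
    simpa using exists_invariant_ne_bot_ne_top_of_commute (by simp)
      (fun g => toLinAlgEquiv' (ρ g : Matrix (Fin 2) (Fin 2) ℂ))
      (fun g h => commute_toLinAlgEquiv'_iff.mpr (congrArg Subtype.val (hab g h)))
end

section
/- A representation ρ : G → SL(2,ℂ) is reducible if and only if Tr ρ(γδγ⁻¹δ⁻¹) = 2 for all γ, δ ∈ G. -/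
/-!
For `A, B ∈ SL(2)` one has `ABA⁻¹B⁻¹ - 1 = (AB - BA)(BA)⁻¹` and `det (C - 1) = 2 - tr C`, so
`tr [A, B] = 2` exactly when `AB - BA` is singular. A common eigenvector of `A` and `B` lies in
the kernel of `AB - BA`. Conversely, if some `A = ρ g₀` is not scalar, take an eigenvector `v`
of `A` (eigenvalue `μ`) and a vector `w` whose line `A` does not preserve; then `det (AB - BA)`
is, up to the unit `wedge v w ^ 2`, the product `wedge v (Bv) * wedge x (Bx)` with
`x = (A - μ) w`. So every `ρ g` preserves the line of `v` or that of `x`; these two line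
stabilizers are subgroups covering `G`, and a group is not the union of two proper subgroups.
-/

open Matrix

lemma Submodule.ne_bot_and_ne_top_iff_exists_eq_span_singleton {K V : Type*} [Field K]
    [AddCommGroup V] [Module K V] (hV : Module.finrank K V = 2) {W : Submodule K V} :
    W ≠ ⊥ ∧ W ≠ ⊤ ↔ ∃ v ≠ 0, W = K ∙ v := by
  have : FiniteDimensional K V := Module.finite_of_finrank_eq_succ hV
  constructor
  · rintro ⟨hbot, htop⟩
    obtain ⟨v, hvW, hv0⟩ := W.ne_bot_iff.1 hbot
    refine ⟨v, hv0, (eq_of_le_of_finrank_eq ((span_singleton_le_iff_mem v W).2 hvW) ?_).symm⟩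
    have hlt := Submodule.finrank_lt htop
    have hpos := Submodule.finrank_eq_zero.not.2 hbot
    rw [finrank_span_singleton hv0]
    omega
  · rintro ⟨v, hv0, rfl⟩
    refine ⟨by simpa using hv0, fun htop ↦ ?_⟩
    have hone := finrank_span_singleton (K := K) hv0
    rw [htop, finrank_top] at hone
    omega

namespace Matrix

section CommRing

variable {R : Type*} [CommRing R]

def wedge (u v : Fin 2 → R) : R := (Matrix.of ![u, v]).det

lemma wedge_apply (u v : Fin 2 → R) : wedge u v = u 0 * v 1 - u 1 * v 0 := by
  simp [wedge, det_fin_two]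

lemma smul_eq_vecMulVec_of_mulVec_eq_zero {N : Matrix (Fin 2) (Fin 2) R} {v : Fin 2 → R}
    (hv : N *ᵥ v = 0) (w : Fin 2 → R) :
    wedge v w • N = vecMulVec (N *ᵥ w) ![-v 1, v 0] := by
  have h0 := congrFun hv 0
  have h1 := congrFun hv 1
  simp only [mulVec, dotProduct, Fin.sum_univ_two, Pi.zero_apply] at h0 h1
  ext i j
  fin_cases i <;> fin_cases j <;> simp [wedge_apply, vecMulVec_apply]
  · linear_combination w 1 * h0
  · linear_combination -w 0 * h0
  · linear_combination w 1 * h1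
  · linear_combination -w 0 * h1

lemma det_vecMulVec_mul_sub_mul (x v : Fin 2 → R) (B : Matrix (Fin 2) (Fin 2) R) :
    det (vecMulVec x ![-v 1, v 0] * B - B * vecMulVec x ![-v 1, v 0]) =
      -(wedge v (B *ᵥ v) * wedge x (B *ᵥ x)) := by
  simp [det_fin_two, wedge_apply, mul_apply]
  ring

/-- Since `v` is in the kernel of `N = A - μ`, the matrix `wedge v w • N` has rank one, and for
rank-one matrices the determinant of the commutator factors. -/
lemma det_mul_sub_mul_mul_wedge_sq {A : Matrix (Fin 2) (Fin 2) R} {v : Fin 2 → R} {μ : R}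
    (hv : A *ᵥ v = μ • v) (B : Matrix (Fin 2) (Fin 2) R) (w : Fin 2 → R) :
    det (A * B - B * A) * wedge v w ^ 2 =
      -(wedge v (B *ᵥ v) * wedge (A *ᵥ w - μ • w) (B *ᵥ (A *ᵥ w - μ • w))) := by
  set N := A - μ • 1
  have hN : N *ᵥ v = 0 := by rw [sub_mulVec, hv, smul_mulVec, one_mulVec, sub_self]
  have hNw : N *ᵥ w = A *ᵥ w - μ • w := by rw [sub_mulVec, smul_mulVec, one_mulVec]
  have hcomm : A * B - B * A = N * B - B * N := by
    simp only [N, sub_mul, mul_sub, smul_mul_assoc, mul_smul_comm, one_mul, mul_one]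
    abel
  rw [← hNw, ← det_vecMulVec_mul_sub_mul, ← smul_eq_vecMulVec_of_mulVec_eq_zero hN, hcomm,
    smul_mul_assoc, mul_smul_comm, ← smul_sub, det_smul, Fintype.card_fin, mul_comm]

lemma det_sub_one_fin_two (C : Matrix (Fin 2) (Fin 2) R) :
    det (C - 1) = det C - trace C + 1 := by
  simp [det_fin_two, trace_fin_two]
  ring

lemma trace_eq_two_iff_det_sub_one_eq_zero {C : Matrix (Fin 2) (Fin 2) R} (hC : det C = 1) :
    trace C = 2 ↔ det (C - 1) = 0 := by
  rw [det_sub_one_fin_two, hC]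
  constructor <;> intro h <;> linear_combination -h

section SpecialLinearGroup

variable {n : Type*} [Fintype n] [DecidableEq n]

local notation:1024 "↑ₘ" A:1024 => ((A : SpecialLinearGroup n R) : Matrix n n R)

lemma det_coe_commutator_sub_one (A B : SpecialLinearGroup n R) :
    det (↑ₘ(A * B * A⁻¹ * B⁻¹) - 1) = det (↑ₘA * ↑ₘB - ↑ₘB * ↑ₘA) := by
  have h : A * B * A⁻¹ * B⁻¹ = (A * B) * (B * A)⁻¹ := by group
  have h1 : (1 : Matrix n n R) = ↑ₘ((B * A) * (B * A)⁻¹) := by simp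
  rw [h, h1, SpecialLinearGroup.coe_mul (A * B), SpecialLinearGroup.coe_mul (B * A), ← sub_mul,
    det_mul, SpecialLinearGroup.det_coe, mul_one, SpecialLinearGroup.coe_mul,
    SpecialLinearGroup.coe_mul]

end SpecialLinearGroup

end CommRing

section Field

variable {K : Type*} [Field K]

lemma wedge_eq_zero_iff_mem_span {u v : Fin 2 → K} (hu : u ≠ 0) :
    wedge u v = 0 ↔ v ∈ K ∙ u := by
  rw [wedge, ← not_iff_not, ← ne_eq, ← isUnit_iff_ne_zero, ← isUnit_iff_isUnit_det,
    ← linearIndependent_rows_iff_isUnit, Submodule.mem_span_singleton, not_exists]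
  exact LinearIndependent.pair_iff' hu

lemma det_mul_sub_mul_eq_zero_of_mulVec_mem_span {n : Type*} [Fintype n] [DecidableEq n]
    {A B : Matrix n n K} {v : n → K} (hv : v ≠ 0) (hA : A *ᵥ v ∈ K ∙ v)
    (hB : B *ᵥ v ∈ K ∙ v) : det (A * B - B * A) = 0 := by
  obtain ⟨a, ha⟩ := Submodule.mem_span_singleton.1 hA
  obtain ⟨b, hb⟩ := Submodule.mem_span_singleton.1 hB
  refine exists_mulVec_eq_zero_iff.1 ⟨v, hv, ?_⟩
  rw [sub_mulVec, ← mulVec_mulVec, ← mulVec_mulVec, ← ha, ← hb, mulVec_smul, mulVec_smul, ← ha,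
    ← hb, smul_smul, smul_smul, mul_comm, sub_self]

lemma exists_two_lines_of_not_mulVec_mem_span [IsAlgClosed K]
    {A : Matrix (Fin 2) (Fin 2) K} {u : Fin 2 → K} (hu : A *ᵥ u ∉ K ∙ u) :
    ∃ v₁ v₂ : Fin 2 → K, v₁ ≠ 0 ∧ v₂ ≠ 0 ∧ ∀ B : Matrix (Fin 2) (Fin 2) K,
      det (A * B - B * A) = 0 → B *ᵥ v₁ ∈ K ∙ v₁ ∨ B *ᵥ v₂ ∈ K ∙ v₂ := by
  obtain ⟨μ, hμ⟩ := Module.End.exists_eigenvalue (toLin' A)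
  obtain ⟨v, hv, hv0⟩ := hμ.exists_hasEigenvector
  rw [Module.End.mem_eigenspace_iff, toLin'_apply] at hv
  have hx : A *ᵥ u - μ • u ≠ 0 := fun h ↦
    hu (Submodule.mem_span_singleton.2 ⟨μ, (sub_eq_zero.1 h).symm⟩)
  have hw : wedge v u ≠ 0 := by
    intro h
    obtain ⟨a, rfl⟩ := Submodule.mem_span_singleton.1 ((wedge_eq_zero_iff_mem_span hv0).1 h)
    refine hu (Submodule.mem_span_singleton.2 ⟨μ, ?_⟩)
    rw [mulVec_smul, hv, smul_comm]
  refine ⟨v, _, hv0, hx, fun B hB ↦ ?_⟩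
  have h := det_mul_sub_mul_mul_wedge_sq hv B u
  rwa [hB, zero_mul, zero_eq_neg, mul_eq_zero, wedge_eq_zero_iff_mem_span hv0,
    wedge_eq_zero_iff_mem_span hx] at h

section SpecialLinearGroup

variable {n : Type*} [Fintype n] [DecidableEq n]

local notation:1024 "↑ₘ" A:1024 => ((A : SpecialLinearGroup n K) : Matrix n n K)

def SpecialLinearGroup.lineStabilizer (v : n → K) : Subgroup (SpecialLinearGroup n K) where
  carrier := {A | ↑ₘA *ᵥ v ∈ K ∙ v}
  one_mem' := by simp [Submodule.mem_span_singleton_self]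
  mul_mem' {A B} hA hB := by
    obtain ⟨b, hb⟩ := Submodule.mem_span_singleton.1 hB
    show ↑ₘ(A * B) *ᵥ v ∈ K ∙ v
    rw [SpecialLinearGroup.coe_mul, ← mulVec_mulVec, ← hb, mulVec_smul]
    exact Submodule.smul_mem _ _ hA
  inv_mem' {A} hA := by
    obtain ⟨a, ha⟩ := Submodule.mem_span_singleton.1 hA
    have hv : a • ↑ₘA⁻¹ *ᵥ v = v := by
      rw [← mulVec_smul, ha, mulVec_mulVec, ← SpecialLinearGroup.coe_mul, inv_mul_cancel,
        SpecialLinearGroup.coe_one, one_mulVec]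
    show ↑ₘA⁻¹ *ᵥ v ∈ K ∙ v
    rcases eq_or_ne a 0 with rfl | ha0
    · rw [zero_smul] at hv
      simp [← hv]
    · rw [← inv_smul_smul₀ ha0 (↑ₘA⁻¹ *ᵥ v), hv]
      exact Submodule.smul_mem _ _ (Submodule.mem_span_singleton_self v)

end SpecialLinearGroup

lemma exists_invariant_ne_bot_ne_top_iff_exists_common_eigenvector {ι : Type*}
    (M : ι → Matrix (Fin 2) (Fin 2) K) :
    (∃ W : Submodule K (Fin 2 → K), W ≠ ⊥ ∧ W ≠ ⊤ ∧ ∀ i, ∀ v ∈ W, M i *ᵥ v ∈ W) ↔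
      ∃ v ≠ 0, ∀ i, M i *ᵥ v ∈ K ∙ v := by
  simp_rw [← and_assoc, Submodule.ne_bot_and_ne_top_iff_exists_eq_span_singleton
    (Module.finrank_fin_fun K)]
  constructor
  · rintro ⟨_, ⟨v, hv, rfl⟩, hM⟩
    exact ⟨v, hv, fun i ↦ hM i v (Submodule.mem_span_singleton_self v)⟩
  · rintro ⟨v, hv, hM⟩
    refine ⟨K ∙ v, ⟨v, hv, rfl⟩, fun i w hw ↦ ?_⟩
    obtain ⟨a, rfl⟩ := Submodule.mem_span_singleton.1 hw
    rw [mulVec_smul]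
    exact Submodule.smul_mem _ _ (hM i)

local notation:1024 "↑ₘ" A:1024 =>
  ((A : SpecialLinearGroup (Fin 2) K) : Matrix (Fin 2) (Fin 2) K)

lemma exists_common_eigenvector_iff_det_mul_sub_mul_eq_zero [IsAlgClosed K] {G : Type*}
    [Group G] (ρ : G →* SpecialLinearGroup (Fin 2) K) :
    (∃ v ≠ 0, ∀ g, ↑ₘ(ρ g) *ᵥ v ∈ K ∙ v) ↔
      ∀ g h, det (↑ₘ(ρ g) * ↑ₘ(ρ h) - ↑ₘ(ρ h) * ↑ₘ(ρ g)) = 0 := by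
  refine ⟨fun ⟨v, hv, hρ⟩ g h ↦ det_mul_sub_mul_eq_zero_of_mulVec_mem_span hv (hρ g) (hρ h),
    fun hρ ↦ ?_⟩
  by_cases hscalar : ∀ g u, ↑ₘ(ρ g) *ᵥ u ∈ K ∙ u
  · exact ⟨Pi.single 0 1, by simp, fun g ↦ hscalar g _⟩
  simp only [not_forall] at hscalar
  obtain ⟨g₀, u, hu⟩ := hscalar
  obtain ⟨v₁, v₂, hv₁, hv₂, hsplit⟩ := exists_two_lines_of_not_mulVec_mem_span hu
  have hcover : ((⊤ : Subgroup G) : Set G) ⊆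
      (SpecialLinearGroup.lineStabilizer v₁).comap ρ ∪
        (SpecialLinearGroup.lineStabilizer v₂).comap ρ :=
    fun g _ ↦ hsplit _ (hρ g₀ g)
  rcases SubgroupClass.subset_union.1 hcover with h | h
  · exact ⟨v₁, hv₁, fun g ↦ h (Subgroup.mem_top g)⟩
  · exact ⟨v₂, hv₂, fun g ↦ h (Subgroup.mem_top g)⟩

end Field

end Matrix

/-- A representation `ρ : G → SL(2,ℂ)` is reducible if and only if
`Tr ρ(γδγ⁻¹δ⁻¹) = 2` for all `γ, δ ∈ G` (Culler–Shalen, Lemma 1.2.1). -/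
theorem sl2C_reducible_iff_trace_commutator_eq_two (G : Type*) [Group G]
    (ρ : G →* Matrix.SpecialLinearGroup (Fin 2) ℂ) :
    (∃ W : Submodule ℂ (Fin 2 → ℂ), W ≠ ⊥ ∧ W ≠ ⊤ ∧
      ∀ g : G, ∀ v ∈ W, (ρ g : Matrix (Fin 2) (Fin 2) ℂ).mulVec v ∈ W) ↔
    (∀ γ δ : G, Matrix.trace (ρ (γ * δ * γ⁻¹ * δ⁻¹) : Matrix (Fin 2) (Fin 2) ℂ) = 2) := by
  rw [exists_invariant_ne_bot_ne_top_iff_exists_common_eigenvector,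
    exists_common_eigenvector_iff_det_mul_sub_mul_eq_zero]
  refine forall₂_congr fun γ δ ↦ ?_
  rw [trace_eq_two_iff_det_sub_one_eq_zero (Matrix.SpecialLinearGroup.det_coe _), map_mul, map_mul,
    map_mul, map_inv, map_inv, det_coe_commutator_sub_one]
end

section
/- Column sum identity for colored Gassner matrices: let β be an automorphism of F_n fixing the product x₁x₂⋯x_n, and ψ_c : ℤ[F_n] → Λ_μ the map induced by x_i ↦ t_{c_i}. Then for each j, Σ_{i=1}^n t_{c_1}⋯t_{c_{i−1}} · ψ_c(∂(x_i β)/∂x_j) = t_{c_1}⋯t_{c_{j−1}}. -/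
noncomputable section

/-- The group `ℤ^μ` written multiplicatively. -/
abbrev LamGroup (μ : ℕ) := Multiplicative (Fin μ → ℤ)

/-- The Laurent polynomial ring `Λ_μ = ℤ[t₁^{±1}, …, t_μ^{±1}]`. -/
abbrev LamRing (μ : ℕ) := MonoidAlgebra ℤ (LamGroup μ)

/-- The unit `tᵢ` of `Λ_μ`. -/
def tVar {μ : ℕ} (i : Fin μ) : (LamRing μ)ˣ :=
  (MonoidAlgebra.of ℤ (LamGroup μ)).toHomUnits (Multiplicative.ofAdd (Pi.single i 1))

/-- The ring homomorphism `ψ_c : ℤ[F_n] → Λ_μ` induced by `x_i ↦ t_{c_i}`. -/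
def psiC {μ n : ℕ} (c : Fin n → Fin μ) :
    MonoidAlgebra ℤ (FreeGroup (Fin n)) →+* LamRing μ :=
  ((MonoidAlgebra.lift ℤ (LamRing μ) (FreeGroup (Fin n)))
    ((Units.coeHom (LamRing μ)).comp
      (FreeGroup.lift (fun i => tVar (c i))))).toRingHom

/-! Applying `∂/∂x_j` to `(x₁⋯x_n)β = x₁⋯x_n` and expanding both sides by the product rule gives
`Σ_i (x₁β⋯x_{i-1}β)·∂(x_iβ)/∂x_j = x₁⋯x_{j-1}`. Under `ψ_c` the prefix products `x₁β⋯x_{i-1}β`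
and `x₁⋯x_{i-1}` both become `t_{c_1}⋯t_{c_{i-1}}`, because `ψ_c(x_kβ) = t_{c_k} = ψ_c(x_k)`. -/

-- The Fox derivatives are the crossed homomorphisms `F_n → ℤ[F_n]` for `χ = MonoidAlgebra.of`.
def IsCrossedHom {G R : Type*} [Monoid G] [Semiring R] (χ : G →* R) (D : G → R) : Prop :=
  ∀ u v, D (u * v) = D u + χ u * D v

namespace IsCrossedHom

variable {G R S : Type*} [Monoid G]

theorem map_one [Ring R] {χ : G →* R} {D : G → R} (hD : IsCrossedHom χ D) : D 1 = 0 := by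
  simpa using hD 1 1

theorem comp_ringHom [Semiring R] [Semiring S] {χ : G →* R} {D : G → R}
    (hD : IsCrossedHom χ D) (ψ : R →+* S) :
    IsCrossedHom ((ψ : R →* S).comp χ) (ψ ∘ D) := fun u v => by
  simp [hD u v]

theorem map_list_prod_ofFn [Ring R] {χ : G →* R} {D : G → R} (hD : IsCrossedHom χ D)
    {n : ℕ} (f : Fin n → G) :
    D (List.ofFn f).prod = ∑ i : Fin n, χ ((List.ofFn f).take i).prod * D (f i) := by
  induction n with
  | zero => simp [hD.map_one]
  | succ n ih =>
    rw [List.ofFn_succ, List.prod_cons, hD, ih, Fin.sum_univ_succ, Finset.mul_sum]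
    simp [mul_assoc]

theorem map_list_prod_ofFn_of_comm [CommRing R] {χ : G →* R} {D : G → R}
    (hD : IsCrossedHom χ D) {n : ℕ} (f : Fin n → G) :
    D (List.ofFn f).prod = ∑ i : Fin n, (∏ k with k < i, χ (f k)) * D (f i) := by
  rw [hD.map_list_prod_ofFn]
  simp only [map_list_prod, List.map_take, List.map_ofFn, List.prod_take_ofFn]
  rfl

end IsCrossedHom

theorem psiC_of {μ n : ℕ} (c : Fin n → Fin μ) (i : Fin n) :
    psiC c (MonoidAlgebra.of ℤ (FreeGroup (Fin n)) (FreeGroup.of i)) = tVar (c i) := by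
  simp [psiC]

/-- Column sum identity for the colored Gassner matrix: if `β` is an automorphism
of `F_n` fixing `x₁x₂⋯x_n` with `ψ_c(x_i β) = t_{c_i}` for all `i`, then for each
`j`, `Σ_i t_{c_1}⋯t_{c_{i−1}}·ψ_c(∂(x_i β)/∂x_j) = t_{c_1}⋯t_{c_{j−1}}`. -/
theorem gassner_column_sum {μ n : ℕ} (c : Fin n → Fin μ)
    (β : FreeGroup (Fin n) ≃* FreeGroup (Fin n))
    (hβ : ∀ i : Fin n,
      psiC c (MonoidAlgebra.of ℤ (FreeGroup (Fin n)) (β (FreeGroup.of i)))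
        = (tVar (c i) : LamRing μ))
    (hfix : β (List.ofFn (fun i : Fin n => FreeGroup.of i)).prod
      = (List.ofFn (fun i : Fin n => FreeGroup.of i)).prod)
    (d : Fin n → FreeGroup (Fin n) → MonoidAlgebra ℤ (FreeGroup (Fin n)))
    (hgen : ∀ j i : Fin n, d j (FreeGroup.of i) = if i = j then 1 else 0)
    (hprod : ∀ (j : Fin n) (u v : FreeGroup (Fin n)),
      d j (u * v) = d j u + MonoidAlgebra.of ℤ (FreeGroup (Fin n)) u * d j v)
    (j : Fin n) :
    ∑ i : Fin n,
        ((Finset.univ.filter (fun k : Fin n => k < i)).prod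
            fun k => (tVar (c k) : LamRing μ))
          * psiC c (d j (β (FreeGroup.of i)))
      = (Finset.univ.filter (fun k : Fin n => k < j)).prod
          fun k => (tVar (c k) : LamRing μ) := by
  have hD : IsCrossedHom _ (psiC c ∘ d j) := IsCrossedHom.comp_ringHom (hprod j) (psiC c)
  calc _ = psiC c (d j (β (List.ofFn FreeGroup.of).prod)) := by
          rw [map_list_prod, List.map_ofFn, ← Function.comp_apply (f := psiC c),
            hD.map_list_prod_ofFn_of_comm]
          simp only [Function.comp_apply, MonoidHom.comp_apply, MonoidHom.coe_coe, hβ]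
    _ = psiC c (d j (List.ofFn FreeGroup.of).prod) := by rw [hfix]
    _ = _ := by
          rw [← Function.comp_apply (f := psiC c), hD.map_list_prod_ofFn_of_comm]
          simp only [Function.comp_apply, MonoidHom.comp_apply, MonoidHom.coe_coe, psiC_of, hgen]
          simp

end
end

section
/- Let M be an n×n matrix over a commutative ring R, let v ∈ Rⁿ with entries v_i = t_{c_i} − 1 (t_{c_i} ∈ R units), and suppose every row of M satisfies Σ_j M_{ij} v_j = v_i (i.e., Mv = v). Define the minor determinants 𝔅(l,m) := det((M − I) with row l and column m deleted). Then for all indices i ≠ m: (t_{c_i} − 1)·𝔅(l,m) = (−1)^{i+m}(t_{c_m} − 1)·𝔅(l,i). -/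
open Matrix

/-! If `A v = 0`, then the cofactors along any row `l` of `A` are proportional to `v`:
`v i · adj(A) m l = v m · adj(A) i l`. To see this over an arbitrary commutative ring, replace
row `l` of `A` by the unit row `e_m`; the resulting matrix `B` sends `v` to `v m • e_l`, so
`det B • v = adj(B) (B v) = v m • adj(B) e_l`, and both `det B` and `adj(B) e_l` are cofactors
of `A` along row `l`. The theorem is the case `A = M - 1`, with the cofactors written out as
signed minors. -/

namespace Matrix

variable {ι R : Type*} [Fintype ι] [DecidableEq ι] [CommRing R]

theorem updateRow_single_mulVec_of_mulVec_eq_zero {A : Matrix ι ι R} {v : ι → R}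
    (hAv : A *ᵥ v = 0) (l m : ι) :
    A.updateRow l (Pi.single m 1) *ᵥ v = v m • Pi.single l 1 := by
  rw [updateRow_mulVec, hAv, single_one_dotProduct, ← Pi.single_smul, smul_eq_mul, mul_one]
  rfl

theorem mul_adjugate_apply_eq_of_mulVec_eq_zero {A : Matrix ι ι R} {v : ι → R}
    (hAv : A *ᵥ v = 0) (l m i : ι) :
    v i * adjugate A m l = v m * adjugate A i l := by
  set B := A.updateRow l (Pi.single m 1)
  have hdet : adjugate A m l = B.det := adjugate_apply A m l
  have hcol : adjugate A i l = adjugate B i l := by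
    rw [adjugate_apply, adjugate_apply, updateRow_idem]
  have key : B.det • v = v m • adjugate B *ᵥ Pi.single l 1 := by
    rw [← mulVec_smul, ← updateRow_single_mulVec_of_mulVec_eq_zero hAv, mulVec_mulVec,
      adjugate_mul, smul_mulVec, one_mulVec]
  have key_i := congrFun key i
  simp only [Pi.smul_apply, mulVec_single_one, col_apply, smul_eq_mul] at key_i
  rw [hdet, hcol, mul_comm, key_i]

end Matrix

theorem minor_column_relation_general {R : Type*} [CommRing R] {n : ℕ}
    (M : Matrix (Fin (n + 1)) (Fin (n + 1)) R) (t : Fin (n + 1) → Rˣ)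
    (hM : M.mulVec (fun j => (t j : R) - 1) = fun j => (t j : R) - 1)
    (l m i : Fin (n + 1)) :
    ((t i : R) - 1) * ((M - 1).submatrix l.succAbove m.succAbove).det
      = (-1 : R) ^ ((i : ℕ) + (m : ℕ)) * ((t m : R) - 1)
          * ((M - 1).submatrix l.succAbove i.succAbove).det := by
  have hker : (M - 1) *ᵥ (fun j => (t j : R) - 1) = 0 := by
    rw [sub_mulVec, hM, one_mulVec, sub_self]
  have h := mul_adjugate_apply_eq_of_mulVec_eq_zero hker l m i
  simp only [adjugate_fin_succ_eq_det_submatrix] at h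
  have hsign : (-1 : R) ^ ((i : ℕ) + (m : ℕ)) = (-1) ^ ((l : ℕ) + m) * (-1) ^ ((l : ℕ) + i) := by
    rw [← pow_add, show (l : ℕ) + m + (l + i) = i + m + 2 * l by ring,
      pow_add _ (_ + _) (2 * _), pow_mul, neg_one_sq, one_pow, mul_one]
  have hsq : (-1 : R) ^ ((l : ℕ) + m) * (-1) ^ ((l : ℕ) + m) = 1 := by
    rw [← pow_add, ← two_mul, pow_mul, neg_one_sq, one_pow]
  linear_combination (-1 : R) ^ ((l : ℕ) + m) * h
    - ((t m : R) - 1) * ((M - 1).submatrix l.succAbove i.succAbove).det * hsign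
    - ((t i : R) - 1) * ((M - 1).submatrix l.succAbove m.succAbove).det * hsq

/-- Minor relation (column case of Lemma `HeusenerKrollLemme221`): if `M v = v`
for the vector `v` with entries `t_{c_i} − 1`, then the minors
`𝔅(l,m) = det((M − I) with row l, column m deleted)` satisfy
`(t_{c_i} − 1)·𝔅(l,m) = (−1)^{i+m}(t_{c_m} − 1)·𝔅(l,i)` for `i ≠ m`. -/
theorem minor_column_relation {R : Type*} [CommRing R] {n : ℕ}
    (M : Matrix (Fin (n + 1)) (Fin (n + 1)) R) (t : Fin (n + 1) → Rˣ)
    (hM : M.mulVec (fun j => (t j : R) - 1) = fun j => (t j : R) - 1)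
    (l m i : Fin (n + 1)) (him : i ≠ m) :
    ((t i : R) - 1) * ((M - 1).submatrix l.succAbove m.succAbove).det
      = (-1 : R) ^ ((i : ℕ) + (m : ℕ)) * ((t m : R) - 1)
          * ((M - 1).submatrix l.succAbove i.succAbove).det :=
  minor_column_relation_general M t hM l m i
end

section
/- Crossing-change identity for the Gassner matrix of σ₁²: let ω ∈ ℂ* and let G(σ₁²) = [[1 − ω + ω², ω(1 − ω)], [1 − ω, ω]] ⊕ I_{n−2}. Let M = [[A,B],[C,D]] be an n×n complex matrix with A 2×2. Write minors 𝔅(N; l, m) := det((N − I_n) with row l, column m deleted). Assume (as follows from the row-sum relations) that −𝔅(M; 2, 1) = ω·𝔅(M; 1, 1). Then 𝔅(G(σ₁²)·M; 1, 1) = ω²·𝔅(M; 1, 1) + (ω − 1)·det(D − I_{n−2}). -/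
/-!
Deleting the first row and column, the only remaining row in which `G(σ₁²)·M − I` differs from
`M − I` is the second one, `(1 − ω)·M₁ + ω·M₂ − e₂`. Expanding the minor along that row gives
`(1 − ω)·𝔅(M; 2, 1) + ω·𝔅(M; 1, 1) + (ω − 1)·det(D − I)`, the last term by Laplace expansion
along the unit row, and the hypothesis `𝔅(M; 2, 1) = −ω·𝔅(M; 1, 1)` turns this into the claim.
-/

open Matrix

noncomputable section

/-- The minor `𝔅(N; l, m)`: the determinant of `N − I` with row `l` and column
`m` deleted. -/
def minorB {n : ℕ} (N : Matrix (Fin (n + 2)) (Fin (n + 2)) ℂ) (l m : Fin (n + 2)) : ℂ :=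
  ((N - 1).submatrix l.succAbove m.succAbove).det

/-- The (unreduced) Gassner matrix of `σ₁²` at `ω`:
`[[1−ω+ω², ω(1−ω)],[1−ω, ω]] ⊕ I_{n}` as an `(n+2)×(n+2)` matrix. -/
def gassnerSigmaOneSq (n : ℕ) (ω : ℂ) : Matrix (Fin (n + 2)) (Fin (n + 2)) ℂ :=
  Matrix.of fun i j =>
    if i = 0 ∧ j = 0 then 1 - ω + ω ^ 2
    else if i = 0 ∧ j = 1 then ω * (1 - ω)
    else if i = 1 ∧ j = 0 then 1 - ω
    else if i = 1 ∧ j = 1 then ω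
    else if i = j then 1 else 0

namespace Matrix

theorem updateRow_zero_submatrix_succ_eq_submatrix_succAbove_one {α ι : Type*} {n : ℕ}
    (X : Matrix (Fin (n + 2)) ι α) {κ : Type*} (f : κ → ι) :
    (X.submatrix Fin.succ f).updateRow 0 (fun j => X 0 (f j))
      = X.submatrix (Fin.succAbove 1) f := by
  ext i j
  cases i using Fin.cases <;> rfl

variable {R : Type*} [CommRing R] {n : ℕ}

theorem det_updateRow_zero_single_zero (A : Matrix (Fin (n + 1)) (Fin (n + 1)) R) :
    (A.updateRow 0 (Pi.single 0 1)).det = (A.submatrix Fin.succ Fin.succ).det := by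
  rw [← adjugate_apply, adjugate_fin_succ_eq_det_submatrix]
  simp

theorem det_submatrix_succ_succ_of_row_one (X Y : Matrix (Fin (n + 2)) (Fin (n + 2)) R)
    (a b c : R) (hrows : ∀ i : Fin n, Y i.succ.succ = X i.succ.succ)
    (hrow1 : ∀ j : Fin (n + 1),
      Y 1 j.succ = a * X 0 j.succ + b * X 1 j.succ + c * (Pi.single 0 1 : Fin (n + 1) → R) j) :
    (Y.submatrix Fin.succ Fin.succ).det
      = a * (X.submatrix (Fin.succAbove 1) Fin.succ).det
        + b * (X.submatrix Fin.succ Fin.succ).det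
        + c * (X.submatrix (Fin.succ ∘ Fin.succ) (Fin.succ ∘ Fin.succ)).det := by
  have hY : Y.submatrix Fin.succ Fin.succ = (X.submatrix Fin.succ Fin.succ).updateRow 0
      (a • (fun j => X 0 j.succ) + b • (fun j => X 1 j.succ) + c • Pi.single 0 1) := by
    ext i j
    cases i using Fin.cases with
    | zero => simp [hrow1]
    | succ i => simp [hrows]
  rw [hY, det_updateRow_add, det_updateRow_add, det_updateRow_smul, det_updateRow_smul,
    det_updateRow_smul, updateRow_zero_submatrix_succ_eq_submatrix_succAbove_one,
    det_updateRow_zero_single_zero]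
  rw [show (fun j => X 1 j.succ) = X.submatrix Fin.succ Fin.succ 0 from rfl, updateRow_eq_self,
    submatrix_submatrix]

end Matrix

section

variable {n : ℕ} (ω : ℂ) (M : Matrix (Fin (n + 2)) (Fin (n + 2)) ℂ)

theorem gassnerSigmaOneSq_mul_apply_one (j : Fin (n + 2)) :
    (gassnerSigmaOneSq n ω * M) 1 j = (1 - ω) * M 0 j + ω * M 1 j := by
  simp [gassnerSigmaOneSq, mul_apply, Fin.sum_univ_succ, Fin.succ_ne_zero, Fin.succ_succ_ne_one,
    fun i : Fin n => (Fin.succ_succ_ne_one i).symm]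

theorem gassnerSigmaOneSq_mul_apply_succ_succ (i : Fin n) (j : Fin (n + 2)) :
    (gassnerSigmaOneSq n ω * M) i.succ.succ j = M i.succ.succ j := by
  simp [gassnerSigmaOneSq, mul_apply, Fin.succ_ne_zero, Fin.succ_succ_ne_one]

end

theorem of_add_two_eq_submatrix_succ_succ {α : Type*} {n : ℕ}
    (M : Matrix (Fin (n + 2)) (Fin (n + 2)) α) :
    (Matrix.of fun i j : Fin n => M ⟨(i : ℕ) + 2, Nat.add_lt_add_right i.isLt 2⟩
        ⟨(j : ℕ) + 2, Nat.add_lt_add_right j.isLt 2⟩)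
      = M.submatrix (Fin.succ ∘ Fin.succ) (Fin.succ ∘ Fin.succ) :=
  rfl

theorem gassner_crossing_change_minor_general (n : ℕ) (ω : ℂ)
    (M : Matrix (Fin (n + 2)) (Fin (n + 2)) ℂ)
    (D : Matrix (Fin n) (Fin n) ℂ)
    (hD : D = Matrix.of fun i j : Fin n =>
      M ⟨(i : ℕ) + 2, Nat.add_lt_add_right i.isLt 2⟩
        ⟨(j : ℕ) + 2, Nat.add_lt_add_right j.isLt 2⟩)
    (hminor : minorB M 1 0 = -ω * minorB M 0 0) :
    minorB (gassnerSigmaOneSq n ω * M) 0 0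
      = ω ^ 2 * minorB M 0 0 + (ω - 1) * (D - 1).det := by
  have hrows (i : Fin n) : (gassnerSigmaOneSq n ω * M - 1) i.succ.succ = (M - 1) i.succ.succ := by
    ext j
    simp [gassnerSigmaOneSq_mul_apply_succ_succ]
  have hrow1 (j : Fin (n + 1)) : (gassnerSigmaOneSq n ω * M - 1) 1 j.succ
      = (1 - ω) * (M - 1) 0 j.succ + ω * (M - 1) 1 j.succ
        + (ω - 1) * (Pi.single 0 1 : Fin (n + 1) → ℂ) j := by
    cases j using Fin.cases with
    | zero => simp [gassnerSigmaOneSq_mul_apply_one]; ring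
    | succ j =>
      simp [gassnerSigmaOneSq_mul_apply_one, one_apply,
        fun i : Fin (n + 1) => (Fin.succ_ne_zero i).symm,
        fun i : Fin n => (Fin.succ_succ_ne_one i).symm]
  have hD' : D - 1 = (M - 1).submatrix (Fin.succ ∘ Fin.succ) (Fin.succ ∘ Fin.succ) := by
    rw [hD, of_add_two_eq_submatrix_succ_succ]
    ext i j
    simp [one_apply]
  rw [minorB, Fin.succAbove_zero, det_submatrix_succ_succ_of_row_one _ _ _ _ _ hrows hrow1, hD']
  simp only [minorB, Fin.succAbove_zero] at hminor ⊢
  linear_combination (1 - ω) * hminor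

/-- Lemma `HeusenerKrollLemma223`: with `D` the lower-right `n×n` block of `M`
and assuming `−𝔅(M;2,1) = ω·𝔅(M;1,1)`, one has
`𝔅(G(σ₁²)·M; 1, 1) = ω²·𝔅(M;1,1) + (ω−1)·det(D − I)`. -/
theorem gassner_crossing_change_minor (n : ℕ) (ω : ℂ) (hω : ω ≠ 0)
    (M : Matrix (Fin (n + 2)) (Fin (n + 2)) ℂ)
    (D : Matrix (Fin n) (Fin n) ℂ)
    (hD : D = Matrix.of fun i j : Fin n =>
      M ⟨(i : ℕ) + 2, Nat.add_lt_add_right i.isLt 2⟩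
        ⟨(j : ℕ) + 2, Nat.add_lt_add_right j.isLt 2⟩)
    (hminor : minorB M 1 0 = -ω * minorB M 0 0) :
    minorB (gassnerSigmaOneSq n ω * M) 0 0
      = ω ^ 2 * minorB M 0 0 + (ω - 1) * (D - 1).det :=
  gassner_crossing_change_minor_general n ω M D hD hminor

end
end

section
/- Suppose (X₁, X₂, Y₁, Y₂) ∈ SU(2)⁴ with Tr(Xᵢ) = Tr(Yᵢ) = 2cos(α) for α ∈ (0,π), α ≠ π/2, and X₁X₂ = Y₁Y₂. If X₁ = X₂ = diag(e^{iα}, e^{−iα}), then Y₁ = Y₂ = diag(e^{iα}, e^{−iα}). -/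
/-!
An `SU(2)` matrix has the form `Y₁ = [[a, b], [-b̄, ā]]`, and `Y₂ = Y₁⁻¹ X₁ X₂ = Y₁* D²` with
`D = diag(w, w̄)`, `w = e^{iα}`. The two trace conditions become the linear system
`a + ā = w + w̄`, `a w̄² + ā w² = w + w̄` in `(a, ā)`, whose determinant `w² - w̄² = 2i sin 2α`
vanishes on `(0, π)` only at `α = π/2`. Hence `a = w`; then `det Y₁ = |a|² + |b|² = 1` forces
`b = 0`, so `Y₁ = X₁`, and cancelling `Y₁` in `X₁ X₂ = Y₁ Y₂` gives `Y₂ = X₂`.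
-/

open Matrix Complex

lemma eq_of_add_eq_of_mul_sq_add_mul_sq_eq {R : Type*} [CommRing R] [NoZeroDivisors R]
    {a c w w' : R} (hww' : w * w' = 1) (hw : w ^ 2 ≠ w' ^ 2) (h₁ : a + c = w + w')
    (h₂ : a * w' ^ 2 + c * w ^ 2 = w + w') :
    a = w ∧ c = w' := by
  have ha : (a - w) * (w' ^ 2 - w ^ 2) = 0 := by
    linear_combination h₂ - w ^ 2 * h₁ - (w + w') * hww'
  have ha' := sub_eq_zero.mp ((mul_eq_zero.mp ha).resolve_right (sub_ne_zero.mpr hw.symm))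
  exact ⟨ha', by linear_combination h₁ - ha'⟩

namespace Matrix

variable {R : Type*} [CommRing R] [StarRing R]

lemma star_eq_adjugate_of_mem_specialUnitaryGroup {n : Type*} [Fintype n] [DecidableEq n]
    {U : Matrix n n R} (hU : U ∈ specialUnitaryGroup n R) : star U = adjugate U := by
  obtain ⟨hUu, hUdet⟩ := mem_specialUnitaryGroup_iff.mp hU
  calc star U = U⁻¹ := (inv_eq_right_inv (Unitary.mul_star_self_of_mem hUu)).symm
    _ = adjugate U := by rw [inv_def, hUdet, Ring.inverse_one, one_smul]

lemma apply_of_mem_specialUnitaryGroup_fin_two {U : Matrix (Fin 2) (Fin 2) R}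
    (hU : U ∈ specialUnitaryGroup (Fin 2) R) :
    U 1 1 = star (U 0 0) ∧ U 1 0 = -star (U 0 1) := by
  have hstar := star_eq_adjugate_of_mem_specialUnitaryGroup hU
  have h00 := congrFun (congrFun hstar 0) 0
  have h01 := congrFun (congrFun hstar 0) 1
  simp only [Fin.isValue, star_apply, adjugate_fin_two, of_apply, cons_val', cons_val_zero,
    cons_val_fin_one, cons_val_one] at h00 h01
  refine ⟨h00.symm, ?_⟩
  rw [← star_star (U 1 0), h01, star_neg]

lemma eq_of_mem_specialUnitaryGroup_of_trace_eq [NoZeroDivisors R]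
    {U : Matrix (Fin 2) (Fin 2) R} (hU : U ∈ specialUnitaryGroup (Fin 2) R) {w w' : R}
    (hww' : w * w' = 1) (hw : w ^ 2 ≠ w' ^ 2) (h₁ : trace U = w + w')
    (h₂ : trace (star U * !![w ^ 2, 0; 0, w' ^ 2]) = w + w') :
    U = !![w, 0; 0, w'] := by
  obtain ⟨h11, h10⟩ := apply_of_mem_specialUnitaryGroup_fin_two hU
  rw [trace_fin_two, h11] at h₁
  simp only [trace_fin_two, Fin.isValue, mul_apply, star_apply, of_apply, cons_val', cons_val_zero,
    cons_val_fin_one, Fin.sum_univ_two, cons_val_one, mul_zero, add_zero, zero_add, h11,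
    star_star] at h₂
  obtain ⟨h00, hstar00⟩ := eq_of_add_eq_of_mul_sq_add_mul_sq_eq hww' hw h₁
    (by linear_combination h₂)
  have h11' : U 1 1 = w' := h11.trans hstar00
  have hdet : U 0 1 * star (U 0 1) = 0 := by
    have := (mem_specialUnitaryGroup_iff.mp hU).2
    rw [det_fin_two, h00, h11', h10] at this
    linear_combination this - hww'
  have h01 : U 0 1 = 0 := (mul_eq_zero.mp hdet).elim id star_eq_zero.mp
  ext i j
  fin_cases i <;> fin_cases j <;> simp [h00, h01, h10, h11']

end Matrix

lemma Complex.exp_I_mul_sq_sub_exp_neg_I_mul_sq (x : ℂ) :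
    exp (I * x) ^ 2 - exp (-(I * x)) ^ 2 = 2 * I * sin (2 * x) := by
  have h₁ : exp (I * x) ^ 2 = exp (2 * x * I) := by rw [← exp_nat_mul]; ring_nf
  have h₂ : exp (-(I * x)) ^ 2 = exp (-(2 * x) * I) := by rw [← exp_nat_mul]; ring_nf
  linear_combination h₁ - h₂ - I * two_sin (2 * x) + (exp (2 * x * I) - exp (-(2 * x) * I)) * I_sq

lemma Real.sin_two_mul_ne_zero {x : ℝ} (hx : x ∈ Set.Ioo 0 Real.pi) (hx' : x ≠ Real.pi / 2) :
    sin (2 * x) ≠ 0 := by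
  have hsin : sin x ≠ 0 := (sin_pos_of_pos_of_lt_pi hx.1 hx.2).ne'
  have hcos : cos x ≠ 0 := fun h => hx' <| injOn_cos (Set.Ioo_subset_Icc_self hx)
    ⟨by linarith [pi_pos], by linarith [pi_pos]⟩ (by rw [h, cos_pi_div_two])
  rw [sin_two_mul]
  exact mul_ne_zero (mul_ne_zero two_ne_zero hsin) hcos

theorem pillowcase_degenerate_corner_general (α : ℝ) (hα : α ∈ Set.Ioo 0 Real.pi)
    (hα' : α ≠ Real.pi / 2)
    (X₁ X₂ Y₁ Y₂ : Matrix (Fin 2) (Fin 2) ℂ)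
    (hY₁m : Y₁ ∈ Matrix.specialUnitaryGroup (Fin 2) ℂ)
    (htY₁ : Matrix.trace Y₁ = 2 * (Real.cos α : ℂ))
    (htY₂ : Matrix.trace Y₂ = 2 * (Real.cos α : ℂ))
    (hprod : X₁ * X₂ = Y₁ * Y₂)
    (hX₁ : X₁ = !![Complex.exp (Complex.I * α), 0; 0, Complex.exp (-(Complex.I * α))])
    (hX₂ : X₂ = !![Complex.exp (Complex.I * α), 0; 0, Complex.exp (-(Complex.I * α))]) :
    Y₁ = !![Complex.exp (Complex.I * α), 0; 0, Complex.exp (-(Complex.I * α))] ∧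
    Y₂ = !![Complex.exp (Complex.I * α), 0; 0, Complex.exp (-(Complex.I * α))] := by
  have hY₁_star_mul : star Y₁ * Y₁ = 1 := Unitary.star_mul_self_of_mem hY₁m.1
  have hY₂ : Y₂ = star Y₁ * (X₁ * X₂) := by rw [hprod, ← mul_assoc, hY₁_star_mul, one_mul]
  have htwo_cos : 2 * (Real.cos α : ℂ) = exp (I * α) + exp (-(I * α)) := by
    rw [ofReal_cos, two_cos, neg_mul, mul_comm (α : ℂ) I]
  have hY₁ : Y₁ = X₁ := by
    rw [hX₁]
    refine eq_of_mem_specialUnitaryGroup_of_trace_eq hY₁m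
      (by rw [← exp_add, add_neg_cancel, exp_zero]) ?_ (htY₁.trans htwo_cos) ?_
    · rw [← sub_ne_zero, exp_I_mul_sq_sub_exp_neg_I_mul_sq]
      exact mul_ne_zero (mul_ne_zero two_ne_zero I_ne_zero)
        (by exact_mod_cast Real.sin_two_mul_ne_zero hα hα')
    · rw [← htwo_cos, ← htY₂, hY₂, hX₁, hX₂]
      simp [sq]
  refine ⟨hY₁.trans hX₁, ?_⟩
  rw [hY₂, ← hY₁, ← mul_assoc, hY₁_star_mul, one_mul, hX₂]

/-- Degeneracy at `θ₁ = 0` in the pillowcase parametrization (Lemma `HKLemma41`,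
case `α ≠ π/2`): if `X₁ = X₂ = diag(e^{iα}, e^{−iα})` and `(X₁,X₂,Y₁,Y₂)` lies in
`H₂^α` (all traces `2cos α`, `X₁X₂ = Y₁Y₂`), then `Y₁ = Y₂ = diag(e^{iα}, e^{−iα})`. -/
theorem pillowcase_degenerate_corner (α : ℝ) (hα : α ∈ Set.Ioo 0 Real.pi)
    (hα' : α ≠ Real.pi / 2)
    (X₁ X₂ Y₁ Y₂ : Matrix (Fin 2) (Fin 2) ℂ)
    (hX₁m : X₁ ∈ Matrix.specialUnitaryGroup (Fin 2) ℂ)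
    (hX₂m : X₂ ∈ Matrix.specialUnitaryGroup (Fin 2) ℂ)
    (hY₁m : Y₁ ∈ Matrix.specialUnitaryGroup (Fin 2) ℂ)
    (hY₂m : Y₂ ∈ Matrix.specialUnitaryGroup (Fin 2) ℂ)
    (htX₁ : Matrix.trace X₁ = 2 * (Real.cos α : ℂ))
    (htX₂ : Matrix.trace X₂ = 2 * (Real.cos α : ℂ))
    (htY₁ : Matrix.trace Y₁ = 2 * (Real.cos α : ℂ))
    (htY₂ : Matrix.trace Y₂ = 2 * (Real.cos α : ℂ))
    (hprod : X₁ * X₂ = Y₁ * Y₂)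
    (hX₁ : X₁ = !![Complex.exp (Complex.I * α), 0; 0, Complex.exp (-(Complex.I * α))])
    (hX₂ : X₂ = !![Complex.exp (Complex.I * α), 0; 0, Complex.exp (-(Complex.I * α))]) :
    Y₁ = !![Complex.exp (Complex.I * α), 0; 0, Complex.exp (-(Complex.I * α))] ∧
    Y₂ = !![Complex.exp (Complex.I * α), 0; 0, Complex.exp (-(Complex.I * α))] :=
  pillowcase_degenerate_corner_general α hα hα' X₁ X₂ Y₁ Y₂ hY₁m htY₁ htY₂ hprod hX₁ hX₂
end

section
/- Let H be an n×n Hermitian complex matrix with det H ≠ 0, and let H' = H − r·E_{kk} where r > 0 is real and E_{kk} is the matrix with a single 1 in position (k,k). If det H' ≠ 0, then the difference of signatures sign(H') − sign(H) is either 0 or −2. -/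
/-! The signature of a nonsingular Hermitian matrix is `2p - n`, where `p` is the positive index
of its form `x ↦ Re (xᴴ A x)`: the largest dimension of a subspace on which the form is positive
definite. The span of the eigenvectors with positive eigenvalues attains `p`, while the span of the
remaining eigenvectors meets every such subspace trivially. Subtracting `r E_kk` decreases the
form, so `p` cannot grow; the two forms agree on the hyperplane `x_k = 0`, so `p` drops by at
most one. -/

open Matrix

noncomputable section

/-- The signature of a Hermitian matrix: the number of positive eigenvalues minus
the number of negative eigenvalues. -/
def hermSign {n : ℕ} {A : Matrix (Fin n) (Fin n) ℂ} (hA : A.IsHermitian) : ℤ := by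
  classical
  exact ((Finset.univ.filter fun i => 0 < hA.eigenvalues i).card : ℤ)
    - ((Finset.univ.filter fun i => hA.eigenvalues i < 0).card : ℤ)

open Finset Module RCLike Submodule

section PosIndex

variable (K : Type*) {V : Type*} [DivisionRing K] [AddCommGroup V] [Module K V]

def posIndex (Q : V → ℝ) : ℕ :=
  sSup {d | ∃ W : Submodule K V, finrank K W = d ∧ ∀ x ∈ W, x ≠ 0 → 0 < Q x}

variable {K} [FiniteDimensional K V] {Q Q' : V → ℝ}

lemma bddAbove_posIndex_set :
    BddAbove {d | ∃ W : Submodule K V, finrank K W = d ∧ ∀ x ∈ W, x ≠ 0 → 0 < Q x} :=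
  ⟨finrank K V, by rintro _ ⟨W, rfl, -⟩; exact W.finrank_le⟩

lemma finrank_le_posIndex {W : Submodule K V} (hW : ∀ x ∈ W, x ≠ 0 → 0 < Q x) :
    finrank K W ≤ posIndex K Q :=
  le_csSup bddAbove_posIndex_set ⟨W, rfl, hW⟩

lemma exists_finrank_eq_posIndex :
    ∃ W : Submodule K V, finrank K W = posIndex K Q ∧ ∀ x ∈ W, x ≠ 0 → 0 < Q x := by
  refine Nat.sSup_mem ?_ bddAbove_posIndex_set
  exact ⟨0, ⊥, finrank_bot K V, fun _ hx hx0 => absurd ((mem_bot K).1 hx) hx0⟩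

lemma posIndex_mono (h : ∀ x, Q x ≤ Q' x) : posIndex K Q ≤ posIndex K Q' := by
  obtain ⟨W, hW, hpos⟩ := exists_finrank_eq_posIndex (K := K) (Q := Q)
  exact hW ▸ finrank_le_posIndex fun x hx hx0 => (hpos x hx hx0).trans_le (h x)

lemma finrank_le_finrank_inf_ker_add_one (W : Submodule K V) (f : V →ₗ[K] K) :
    finrank K W ≤ finrank K ↥(W ⊓ LinearMap.ker f) + 1 := by
  have h_inf := finrank_sup_add_finrank_inf_eq W (LinearMap.ker f)
  have h_rank := LinearMap.finrank_range_add_finrank_ker f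
  have h_range : finrank K (LinearMap.range f) ≤ 1 := by
    simpa using (LinearMap.range f).finrank_le
  have h_sup := (W ⊔ LinearMap.ker f).finrank_le
  omega

lemma posIndex_le_posIndex_add_one (f : V →ₗ[K] K) (h : ∀ x, f x = 0 → Q x = Q' x) :
    posIndex K Q ≤ posIndex K Q' + 1 := by
  obtain ⟨W, hW, hpos⟩ := exists_finrank_eq_posIndex (K := K) (Q := Q)
  have h_ker : finrank K ↥(W ⊓ LinearMap.ker f) ≤ posIndex K Q' :=
    finrank_le_posIndex fun x hx hx0 => h x hx.2 ▸ hpos x hx.1 hx0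
  have := finrank_le_finrank_inf_ker_add_one W f
  omega

end PosIndex

section Eigenbasis

variable {𝕜 E ι : Type*} [RCLike 𝕜] [NormedAddCommGroup E] [InnerProductSpace 𝕜 E]
  [Fintype ι] (b : OrthonormalBasis ι 𝕜 E) {μ : ι → ℝ} {T : E →ₗ[𝕜] E}

local notation "⟪" x ", " y "⟫" => inner 𝕜 x y

namespace OrthonormalBasis

lemma inner_eq_zero_of_mem_span_image {s : Set ι} {x : E} (hx : x ∈ span 𝕜 (b '' s)) {i : ι}
    (hi : i ∉ s) : ⟪b i, x⟫ = 0 := by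
  rw [← b.repr_apply_apply, ← b.coe_toBasis_repr_apply, ← Finsupp.notMem_support_iff]
  exact fun h => hi (b.toBasis.mem_span_image.1 (by simpa using hx) h)

lemma finrank_span_image_setOf (p : ι → Prop) [DecidablePred p] :
    finrank 𝕜 (span 𝕜 (b '' {i | p i})) = #{i | p i} := by
  have h_indep :=
    b.orthonormal.linearIndependent.comp _ (Subtype.val_injective (p := (· ∈ {i | p i})))
  rw [Set.image_eq_range]
  exact (finrank_span_eq_card h_indep).trans (by simp [Fintype.card_subtype])

end OrthonormalBasis

lemma re_inner_map_self_eq_sum (hT : ∀ i, T (b i) = (μ i : 𝕜) • b i) (x : E) :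
    re ⟪x, T x⟫ = ∑ i, μ i * ‖⟪b i, x⟫‖ ^ 2 := by
  have hTx : T x = ∑ i, (⟪b i, x⟫ * μ i) • b i := by
    conv_lhs => rw [← b.sum_repr' x]
    simp [hT, smul_smul]
  rw [hTx, inner_sum, map_sum]
  refine Finset.sum_congr rfl fun i _ => ?_
  rw [inner_smul_right, ← inner_conj_symm x (b i), mul_right_comm, RCLike.mul_conj]
  norm_cast
  ring

lemma re_inner_map_self_pos_of_mem_span (hT : ∀ i, T (b i) = (μ i : 𝕜) • b i) {x : E}
    (hx : x ∈ span 𝕜 (b '' {i | 0 < μ i})) (hx0 : x ≠ 0) : 0 < re ⟪x, T x⟫ := by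
  have h_zero (i : ι) (hi : ¬ 0 < μ i) : ⟪b i, x⟫ = 0 :=
    b.inner_eq_zero_of_mem_span_image hx hi
  obtain ⟨j, hj⟩ : ∃ j, ⟪b j, x⟫ ≠ 0 := by
    by_contra! h
    exact hx0 (by simpa [h] using (b.sum_repr' x).symm)
  have hμj : 0 < μ j := by_contra fun h => hj (h_zero j h)
  rw [re_inner_map_self_eq_sum b hT]
  refine Finset.sum_pos' (fun i _ => ?_) ⟨j, mem_univ j, by positivity⟩
  by_cases hi : 0 < μ i
  · positivity
  · simp [h_zero i hi]

lemma re_inner_map_self_nonpos_of_mem_span (hT : ∀ i, T (b i) = (μ i : 𝕜) • b i) {x : E}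
    (hx : x ∈ span 𝕜 (b '' {i | μ i ≤ 0})) : re ⟪x, T x⟫ ≤ 0 := by
  rw [re_inner_map_self_eq_sum b hT]
  refine Finset.sum_nonpos fun i _ => ?_
  by_cases hi : μ i ≤ 0
  · exact mul_nonpos_of_nonpos_of_nonneg hi (by positivity)
  · simp [b.inner_eq_zero_of_mem_span_image hx hi]

theorem posIndex_re_inner_map_self (hT : ∀ i, T (b i) = (μ i : 𝕜) • b i) :
    posIndex 𝕜 (fun x => re ⟪x, T x⟫) = #{i | 0 < μ i} := by
  have := b.toBasis.finiteDimensional_of_finite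
  refine le_antisymm ?_ ?_
  · obtain ⟨W, hW, hpos⟩ :=
      exists_finrank_eq_posIndex (K := 𝕜) (Q := fun x => re ⟪x, T x⟫)
    have h_disj : Disjoint W (span 𝕜 (b '' {i | μ i ≤ 0})) := by
      refine disjoint_def.2 fun x hxW hxN => by_contra fun hx0 => ?_
      exact (hpos x hxW hx0).not_ge (re_inner_map_self_nonpos_of_mem_span b hT hxN)
    have h_dim := finrank_add_finrank_le_of_disjoint h_disj
    have h_card : #{i | 0 < μ i} + #{i | μ i ≤ 0} = Fintype.card ι := by
      simpa only [not_lt, card_univ] using card_filter_add_card_filter_not (s := univ) (0 < μ ·)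
    rw [finrank_eq_card_basis b.toBasis, b.finrank_span_image_setOf] at h_dim
    omega
  · have := finrank_le_posIndex fun x hx hx0 => re_inner_map_self_pos_of_mem_span b hT hx hx0
    rwa [b.finrank_span_image_setOf] at this

end Eigenbasis

namespace Matrix

variable {𝕜 ι : Type*} [RCLike 𝕜] [Fintype ι] [DecidableEq ι] {A : Matrix ι ι 𝕜}

def reQuadForm (A : Matrix ι ι 𝕜) (x : EuclideanSpace 𝕜 ι) : ℝ :=
  re (inner 𝕜 x (toEuclideanLin A x))

lemma reQuadForm_sub_single (A : Matrix ι ι 𝕜) (k : ι) (r : ℝ)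
    (x : EuclideanSpace 𝕜 ι) :
    reQuadForm (A - single k k (r : 𝕜)) x = reQuadForm A x - r * ‖x k‖ ^ 2 := by
  rw [reQuadForm, reQuadForm, map_sub, LinearMap.sub_apply, inner_sub_right, map_sub,
    sub_right_inj]
  simp [EuclideanSpace.inner_eq_star_dotProduct, toLpLin_apply, single_mulVec, dotProduct,
    Function.update_apply, mul_assoc, RCLike.mul_conj]

namespace IsHermitian

lemma toEuclideanLin_eigenvectorBasis (hA : A.IsHermitian) (i : ι) :
    toEuclideanLin A (hA.eigenvectorBasis i) =
      (hA.eigenvalues i : 𝕜) • hA.eigenvectorBasis i := by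
  rw [toLpLin_apply, hA.mulVec_eigenvectorBasis, ← RCLike.real_smul_eq_coe_smul (K := 𝕜)]
  rfl

lemma posIndex_reQuadForm (hA : A.IsHermitian) :
    posIndex 𝕜 (reQuadForm A) = #{i | 0 < hA.eigenvalues i} :=
  posIndex_re_inner_map_self _ hA.toEuclideanLin_eigenvectorBasis

lemma card_pos_add_card_neg_eigenvalues (hA : A.IsHermitian) (hdet : A.det ≠ 0) :
    #{i | 0 < hA.eigenvalues i} + #{i | hA.eigenvalues i < 0} = Fintype.card ι := by
  have h_ne (i : ι) : hA.eigenvalues i ≠ 0 := fun hi =>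
    hdet (by rw [hA.det_eq_prod_eigenvalues]; exact prod_eq_zero (mem_univ i) (by simp [hi]))
  rw [← card_univ, ← card_filter_add_card_filter_not (s := univ) (0 < hA.eigenvalues ·)]
  congr 2
  exact filter_congr fun i _ => (not_lt.trans (h_ne i).le_iff_lt).symm

end IsHermitian

end Matrix

lemma hermSign_eq_two_mul_posIndex_sub {n : ℕ} {A : Matrix (Fin n) (Fin n) ℂ}
    (hA : A.IsHermitian) (hdet : A.det ≠ 0) :
    hermSign hA = 2 * posIndex ℂ (reQuadForm A) - n := by
  have h_card := hA.card_pos_add_card_neg_eigenvalues hdet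
  rw [Fintype.card_fin] at h_card
  rw [hA.posIndex_reQuadForm, hermSign]
  omega

/-- Lemma `SignatureLemma`(2): subtracting a positive real `r` from one diagonal
entry of a nonsingular Hermitian matrix changes the signature by `0` or `−2`,
provided the result is again nonsingular. -/
theorem hermitian_sign_diag_perturbation {n : ℕ} (H : Matrix (Fin n) (Fin n) ℂ)
    (hH : H.IsHermitian) (hdet : H.det ≠ 0) (k : Fin n) (r : ℝ) (hr : 0 < r)
    (H' : Matrix (Fin n) (Fin n) ℂ)
    (hH'def : H' = H - Matrix.single k k (r : ℂ))
    (hH' : H'.IsHermitian) (hdet' : H'.det ≠ 0) :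
    hermSign hH' - hermSign hH = 0 ∨ hermSign hH' - hermSign hH = -2 := by
  have hQ (x : EuclideanSpace ℂ (Fin n)) : reQuadForm H' x = reQuadForm H x - r * ‖x k‖ ^ 2 :=
    hH'def ▸ reQuadForm_sub_single H k r x
  have h_le : posIndex ℂ (reQuadForm H') ≤ posIndex ℂ (reQuadForm H) :=
    posIndex_mono fun x => by rw [hQ x]; exact sub_le_self _ (by positivity)
  have h_ge : posIndex ℂ (reQuadForm H) ≤ posIndex ℂ (reQuadForm H') + 1 :=
    posIndex_le_posIndex_add_one (EuclideanSpace.proj k).toLinearMap fun x hxk => by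
      rw [hQ x, show x k = 0 from hxk]
      simp
  rw [hermSign_eq_two_mul_posIndex_sub hH hdet, hermSign_eq_two_mul_posIndex_sub hH' hdet']
  omega

end
end
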